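/- Let f ∈ Q̄[X,Y] be an irreducible polynomial which is not a monomial (i.e. not of the form c·X^i·Y^j), defining the curve C = {(x,y) ∈ (Q̄^×)² : f(x,y)=0}. Then the set C^{[1]} = {(x,y) ∈ (Q̄^×)² : f(x,y)=0 and x^p y^q = 1 for some integers (p,q) ≠ (0,0)} is infinite. -/

import Mathlib

open NumberField IsDedekindDomain MvPolynomial
open scoped Classical

/-- `Qbar` is the field of algebraic numbers, the algebraic closure of `ℚ`. -/
noncomputable abbrev Qbar : Type := AlgebraicClosure ℚ

/-- The curve in the torus `G_m²` cut out by a polynomial `f ∈ Qbar[X,Y]`: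
the set of points `(x,y)` with `x, y ≠ 0` and `f(x,y) = 0`. -/
def curve (f : MvPolynomial (Fin 2) Qbar) : Set (Qbar × Qbar) :=
  {P | P.1 ≠ 0 ∧ P.2 ≠ 0 ∧ MvPolynomial.eval ![P.1, P.2] f = 0}

/-- A subset `C` of the torus `G_m²` is a translate of a subtorus if it is of the form
`{(x,y) : x^a y^b = c}` for some `(a,b) ∈ ℤ² \ {(0,0)}` and some `c ∈ Qbar^×`. -/
def IsSubtorusTranslate (C : Set (Qbar × Qbar)) : Prop :=
  ∃ (a b : ℤ) (c : Qbar), ¬(a = 0 ∧ b = 0) ∧ c ≠ 0 ∧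
    C = {P | P.1 ≠ 0 ∧ P.2 ≠ 0 ∧ P.1 ^ a * P.2 ^ b = c}

/-- The algebra isomorphism between polynomials in one (mv-)variable and `Polynomial`. -/
noncomputable def psiAux : MvPolynomial (Fin 1) Qbar ≃ₐ[Qbar] Polynomial Qbar :=
  (MvPolynomial.renameEquiv Qbar (Equiv.equivPUnit.{1,1} (Fin 1))).trans
    (MvPolynomial.pUnitAlgEquiv Qbar)

lemma psiAux_X : psiAux (MvPolynomial.X 0) = Polynomial.X := by
  simp [psiAux]

lemma eval_psiAux (c : MvPolynomial (Fin 1) Qbar) (y : Qbar) :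
    MvPolynomial.eval ![y] c = (psiAux c).eval y := by
  have h : (Polynomial.aeval y : Polynomial Qbar →ₐ[Qbar] Qbar).comp psiAux.toAlgHom
      = MvPolynomial.aeval ![y] := by
    apply MvPolynomial.algHom_ext; intro i; fin_cases i
    simp [psiAux]
  have h2 := DFunLike.congr_fun h c
  rw [← Polynomial.coe_aeval_eq_eval]
  have h3 : MvPolynomial.eval ![y] c = MvPolynomial.aeval ![y] c := by
    rw [← MvPolynomial.coe_aeval_eq_eval]; rfl
  rw [h3, ← h2]; rfl

lemma eval_pair (f : MvPolynomial (Fin 2) Qbar) (x y : Qbar) :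
    MvPolynomial.eval ![x, y] f
      = Polynomial.eval x
          (Polynomial.map (MvPolynomial.eval ![y]) (MvPolynomial.finSuccEquiv Qbar 1 f)) :=
  MvPolynomial.eval_eq_eval_mv_eval' ![y] x f

lemma coeff_eq_zero_of_no_nonzero_root {p : Polynomial Qbar} (hp : p ≠ 0)
    (h : ∀ x : Qbar, x ≠ 0 → p.eval x ≠ 0) : ∀ j, j ≠ p.natDegree → p.coeff j = 0 := by
  have hsp : p.Splits := IsAlgClosed.splits p
  have hprod := Polynomial.Splits.eq_prod_roots hsp
  have hroots : ∀ r ∈ p.roots, r = 0 := by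
    intro r hr
    by_contra hr0
    exact h r hr0 ((Polynomial.mem_roots hp).mp hr)
  have hmap : p.roots.map (fun a => Polynomial.X - Polynomial.C a)
      = p.roots.map (fun _ => (Polynomial.X : Polynomial Qbar)) := by
    apply Multiset.map_congr rfl
    intro r hr
    rw [hroots r hr]; simp
  rw [hmap, Multiset.map_const', Multiset.prod_replicate] at hprod
  have hlc : p.leadingCoeff ≠ 0 := Polynomial.leadingCoeff_ne_zero.mpr hp
  have hdeg : p.natDegree = Multiset.card p.roots := by
    conv_lhs => rw [hprod]
    rw [Polynomial.natDegree_C_mul_X_pow _ _ hlc]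
  intro j hj
  conv_lhs => rw [hprod]
  rw [Polynomial.coeff_C_mul, Polynomial.coeff_X_pow,
    if_neg (by omega : ¬ j = Multiset.card p.roots), mul_zero]

lemma rootsOfUnity_infinite' : {x : Qbar | ∃ n : ℕ, 0 < n ∧ x ^ n = 1}.Infinite := by
  have hex : ∀ n : ℕ, ∃ ζ : Qbar, IsPrimitiveRoot ζ (n + 1) := by
    intro n
    have : NeZero ((n + 1 : ℕ) : Qbar) := ⟨Nat.cast_ne_zero.mpr (Nat.succ_ne_zero n)⟩
    exact HasEnoughRootsOfUnity.exists_primitiveRoot Qbar (n + 1)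
  choose g hg using hex
  apply Set.infinite_of_injective_forall_mem (f := g)
  · intro a b hab
    have : a + 1 = b + 1 := by
      rw [(hg a).eq_orderOf, (hg b).eq_orderOf, hab]
    omega
  · intro n
    exact ⟨n + 1, Nat.succ_pos n, (hg n).pow_eq_one⟩

lemma rootOfUnity_ne_zero {x : Qbar} (h : ∃ n : ℕ, 0 < n ∧ x ^ n = 1) : x ≠ 0 := by
  obtain ⟨n, hn, hxn⟩ := h
  intro h0
  rw [h0, zero_pow hn.ne'] at hxn
  exact zero_ne_one hxn

/-- **Proposition (`C^{[1]}` is infinite).**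
Let `f ∈ Qbar[X,Y]` be irreducible and not a monomial `c·X^i·Y^j`, defining the curve `C` in
`G_m²`.  Then the set `C^{[1]}` of points of `C` lying on some algebraic subgroup
`{x^p y^q = 1}` of codimension 1 (with `(p,q) ∈ ℤ² \ {(0,0)}`) is infinite. -/
theorem C_inter_codim_one_subgroups_infinite
    (f : MvPolynomial (Fin 2) Qbar) (hirr : Irreducible f)
    (hmon : ¬ ∃ (c : Qbar) (m : Fin 2 →₀ ℕ), f = MvPolynomial.monomial m c) :
    {P : Qbar × Qbar | P.1 ≠ 0 ∧ P.2 ≠ 0 ∧ MvPolynomial.eval ![P.1, P.2] f = 0 ∧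
      ∃ p q : ℤ, ¬(p = 0 ∧ q = 0) ∧ P.1 ^ p * P.2 ^ q = 1}.Infinite := by
  set RU : Set Qbar := {x : Qbar | ∃ n : ℕ, 0 < n ∧ x ^ n = 1} with hRU
  by_cases hline : ∃ r : Qbar, r ≠ 0 ∧ ∀ x : Qbar, MvPolynomial.eval ![x, r] f = 0
  · obtain ⟨r, hr0, hr⟩ := hline
    have : Infinite ↥RU := Set.infinite_coe_iff.mpr rootsOfUnity_infinite'
    apply Set.infinite_of_injective_forall_mem (f := fun z : ↥RU => ((z : Qbar), r))
    · intro a b hab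
      exact Subtype.ext (congrArg Prod.fst hab)
    · rintro ⟨z, hz⟩
      obtain ⟨n, hn, hzn⟩ := hz
      refine ⟨rootOfUnity_ne_zero ⟨n, hn, hzn⟩, hr0, hr z, (n : ℤ), 0, ?_, ?_⟩
      · rintro ⟨h1, -⟩
        exact hn.ne' (by exact_mod_cast h1)
      · show z ^ (n : ℤ) * r ^ (0 : ℤ) = 1
        rw [zpow_natCast, hzn, zpow_zero, mul_one]
  · -- main case
    set e := MvPolynomial.finSuccEquiv Qbar 1 with he
    set F := e f with hFdef
    have hfF : f = e.symm F := (AlgEquiv.symm_apply_apply e f).symm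
    have hFirr : Irreducible F := hirr.map e
    have hF0 : F ≠ 0 := hFirr.ne_zero
    rcases lt_or_ge 1 F.support.card with hcard | hcard
    · -- at least two nonzero coefficients: generic case
      obtain ⟨j1, hj1, j2, hj2, hjne⟩ := Finset.one_lt_card.mp hcard
      have hc1 : F.coeff j1 ≠ 0 := Polynomial.mem_support_iff.mp hj1
      have hc2 : F.coeff j2 ≠ 0 := Polynomial.mem_support_iff.mp hj2
      have hq1 : psiAux (F.coeff j1) ≠ 0 := fun h => hc1 (by
        have := congrArg psiAux.symm h; simpa using this)
      have hq2 : psiAux (F.coeff j2) ≠ 0 := fun h => hc2 (by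
        have := congrArg psiAux.symm h; simpa using this)
      set B : Set Qbar := {y | (psiAux (F.coeff j1)).eval y = 0}
          ∪ {y | (psiAux (F.coeff j2)).eval y = 0} ∪ {0} with hB
      have hBfin : B.Finite :=
        ((Polynomial.finite_setOf_isRoot hq1).union
          (Polynomial.finite_setOf_isRoot hq2)).union (Set.finite_singleton 0)
      set U : Set Qbar := RU \ B with hUdef
      have hUinf : U.Infinite := rootsOfUnity_infinite'.diff hBfin
      have hU : ∀ y ∈ U, ∃ x : Qbar, x ≠ 0 ∧ MvPolynomial.eval ![x, y] f = 0 := by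
        intro y hy
        by_contra hno
        push_neg at hno
        set p : Polynomial Qbar := Polynomial.map (MvPolynomial.eval ![y]) F with hp
        have hev : ∀ x : Qbar, MvPolynomial.eval ![x, y] f = p.eval x := fun x =>
          eval_pair f x y
        have hpc1 : p.coeff j1 ≠ 0 := by
          rw [hp, Polynomial.coeff_map, eval_psiAux]
          exact fun h => hy.2 (Or.inl (Or.inl h))
        have hpc2 : p.coeff j2 ≠ 0 := by
          rw [hp, Polynomial.coeff_map, eval_psiAux]
          exact fun h => hy.2 (Or.inl (Or.inr h))
        have hp0 : p ≠ 0 := fun h => hpc1 (by rw [h, Polynomial.coeff_zero])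
        have hnoroot : ∀ x : Qbar, x ≠ 0 → p.eval x ≠ 0 := by
          intro x hx hevx
          exact hno x hx ((hev x).trans hevx)
        have := coeff_eq_zero_of_no_nonzero_root hp0 hnoroot
        rcases eq_or_ne j1 p.natDegree with h1 | h1
        · exact hpc2 (this j2 (h1 ▸ (Ne.symm hjne)))
        · exact hpc1 (this j1 h1)
      have : Infinite ↥U := Set.infinite_coe_iff.mpr hUinf
      choose xf hxf using fun z : ↥U => hU z z.2
      apply Set.infinite_of_injective_forall_mem (f := fun z : ↥U => (xf z, (z : Qbar)))
      · intro a b hab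
        exact Subtype.ext (congrArg Prod.snd hab)
      · rintro ⟨z, hz⟩
        obtain ⟨n, hn, hzn⟩ := hz.1
        refine ⟨(hxf _).1, rootOfUnity_ne_zero ⟨n, hn, hzn⟩, (hxf _).2, 0, (n : ℤ), ?_, ?_⟩
        · rintro ⟨-, h2⟩
          exact hn.ne' (by exact_mod_cast h2)
        · show xf ⟨z, hz⟩ ^ (0 : ℤ) * z ^ (n : ℤ) = 1
          rw [zpow_zero, one_mul, zpow_natCast, hzn]
    · -- exactly one nonzero coefficient
      have hcard1 : F.support.card = 1 := by
        have : F.support.Nonempty := by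
          rw [Polynomial.nonempty_support_iff]; exact hF0
        have := Finset.card_pos.mpr this
        omega
      obtain ⟨i, hsupp⟩ := Finset.card_eq_one.mp hcard1
      have hc : F.coeff i ≠ 0 := by
        rw [← Polynomial.mem_support_iff, hsupp]; exact Finset.mem_singleton_self i
      have hFm : F = Polynomial.monomial i (F.coeff i) := by
        apply Polynomial.ext
        intro j
        rcases eq_or_ne j i with rfl | hne
        · rw [Polynomial.coeff_monomial, if_pos rfl]
        · rw [Polynomial.coeff_monomial, if_neg (fun h => hne h.symm)]
          rw [← Polynomial.notMem_support_iff, hsupp]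
          simpa using hne
      set c := F.coeff i with hcdef
      -- i must be 0
      rcases i with - | k
      · -- i = 0 : F = C c
        have hFC : F = Polynomial.C c := by rw [hFm]; simp
        have hCcirr : Irreducible (Polynomial.C c) := hFC ▸ hFirr
        have hcirr : Irreducible c := by
          constructor
          · exact fun h => hCcirr.not_isUnit (Polynomial.isUnit_C.mpr h)
          · intro a b hab
            rcases hCcirr.isUnit_or_isUnit (by rw [hab, map_mul]) with h | h
            · exact Or.inl (Polynomial.isUnit_C.mp h)
            · exact Or.inr (Polynomial.isUnit_C.mp h)
        have hqirr : Irreducible (psiAux c) := hcirr.map psiAux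
        have hqdeg : (psiAux c).degree ≠ 0 := fun h =>
          hqirr.not_isUnit (Polynomial.isUnit_iff_degree_eq_zero.mpr h)
        obtain ⟨r, hrroot⟩ := IsAlgClosed.exists_root (psiAux c) hqdeg
        rcases eq_or_ne r 0 with rfl | hrne
        · -- root at 0 : f is a monomial c·Y, contradiction
          exfalso
          have hXdvd : Polynomial.X ∣ psiAux c := Polynomial.X_dvd_iff.mpr
            (by rw [Polynomial.coeff_zero_eq_eval_zero]; exact hrroot)
          obtain ⟨w, hw⟩ := hXdvd
          have hwu : IsUnit w := by
            rcases hqirr.isUnit_or_isUnit hw with h | h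
            · exact absurd h Polynomial.not_isUnit_X
            · exact h
          have hwC : w = Polynomial.C (w.coeff 0) :=
            Polynomial.eq_C_of_degree_le_zero
              (le_of_eq (Polynomial.isUnit_iff_degree_eq_zero.mp hwu))
          set u := w.coeff 0 with hu
          have hceq : c = MvPolynomial.X 0 * MvPolynomial.C u := by
            apply psiAux.injective
            rw [hw, hwC, map_mul, psiAux_X]
            congr 1
            simpa using (psiAux.commutes u).symm
          have hfeq : f = MvPolynomial.monomial (Finsupp.single 1 1) u := by
            rw [hfF, hFC, hceq]
            have h1 : (Polynomial.C (MvPolynomial.X 0 * MvPolynomial.C u)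
                : Polynomial (MvPolynomial (Fin 1) Qbar))
                = Polynomial.C (MvPolynomial.X 0) * Polynomial.C (MvPolynomial.C u) := by
              rw [map_mul]
            rw [h1, map_mul]
            have h2 : e.symm (Polynomial.C (MvPolynomial.X 0)) = MvPolynomial.X 1 := by
              apply e.injective
              rw [AlgEquiv.apply_symm_apply]
              have : ((0 : Fin 1).succ : Fin 2) = 1 := rfl
              rw [← this, he]
              exact (MvPolynomial.finSuccEquiv_X_succ).symm
            have h3 : e.symm (Polynomial.C (MvPolynomial.C u)) = MvPolynomial.C u :=
              e.symm.commutes u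
            rw [h2, h3, mul_comm, MvPolynomial.C_mul_X_eq_monomial]
          exact hmon ⟨u, Finsupp.single 1 1, hfeq⟩
        · -- nonzero root r : the line y = r lies on the curve, contradiction with hline
          exfalso
          apply hline
          refine ⟨r, hrne, fun x => ?_⟩
          rw [eval_pair, ← he, ← hFdef, hFC, Polynomial.map_C, eval_psiAux]
          rw [show (psiAux c).eval r = 0 from hrroot]
          simp
      · -- i = k+1 : F = X * monomial k c, forces f to be a monomial
        exfalso
        have hXF : F = Polynomial.X * Polynomial.monomial k c := by
          rw [hFm, Polynomial.X_mul_monomial]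
        have hGu : IsUnit (Polynomial.monomial k c) := by
          rcases hFirr.isUnit_or_isUnit hXF with h | h
          · exact absurd h Polynomial.not_isUnit_X
          · exact h
        have hk0 : k = 0 := by
          have hdeg := Polynomial.degree_eq_zero_of_isUnit hGu
          rw [Polynomial.degree_monomial k hc] at hdeg
          exact_mod_cast hdeg
        subst hk0
        have hcu : IsUnit c := Polynomial.isUnit_C.mp (by
          rwa [Polynomial.monomial_zero_left] at hGu)
        have hqu : IsUnit (psiAux c) := hcu.map psiAux
        have hqC : psiAux c = Polynomial.C ((psiAux c).coeff 0) :=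
          Polynomial.eq_C_of_degree_le_zero
            (le_of_eq (Polynomial.isUnit_iff_degree_eq_zero.mp hqu))
        set u := (psiAux c).coeff 0 with hu
        have hCC : psiAux (MvPolynomial.C u) = Polynomial.C u := by
          simpa using psiAux.commutes u
        have hceq : c = MvPolynomial.C u := by
          apply psiAux.injective
          rw [hCC, ← hqC]
        have hFm1 : F = Polynomial.monomial 1 c := by
          rw [hFm]
        have hfeq : f = MvPolynomial.monomial (Finsupp.single 0 1) u := by
          rw [hfF, hFm1, hceq, ← Polynomial.C_mul_X_eq_monomial, map_mul, mul_comm]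
          have h2 : e.symm (Polynomial.X) = MvPolynomial.X 0 := by
            apply e.injective
            rw [AlgEquiv.apply_symm_apply, he]
            exact (MvPolynomial.finSuccEquiv_X_zero).symm
          have h3 : e.symm (Polynomial.C (MvPolynomial.C u)) = MvPolynomial.C u :=
            e.symm.commutes u
          rw [h2, h3, mul_comm, MvPolynomial.C_mul_X_eq_monomial]
        exact hmon ⟨u, Finsupp.single 0 1, hfeq⟩
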